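/- Suppose for every t ≥ 1 the two Loewner inequalities (F_t − I) R_t⁻¹ (F_t − I) ≼ (L_t P_{t−1} L_tᵀ + R_t)⁻¹ and G_tᵀ P_{t−1}⁻¹ G_t ≼ P_{t−1}⁻¹ hold. Then the Lyapunov sequence V_t := θ̃_tᵀ P_t⁻¹ θ̃_t is nonincreasing in t, and moreover if there is β > 0 with P_t ≼ β·I for all t, then ‖θ̃_t‖² ≤ β V_0 for every t. -/

import Mathlib

/-!
In information form the update `P_t⁻¹ = P_{t-1}⁻¹ + Lᵀ R⁻¹ L` and the Woodbury identity
`R⁻¹ L P_t Lᵀ R⁻¹ = R⁻¹ - S_t⁻¹` give, for `u = G θ̃_{t-1}`, the exact one-step identity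
`V_t = uᵀ P_{t-1}⁻¹ u + (L u - e)ᵀ R⁻¹ (L u - e) - eᵀ S_t⁻¹ e`.
Since `L u = F e`, the middle term is `eᵀ (F - I) R⁻¹ (F - I) e`, so the first Loewner condition
makes the last two terms nonpositive and the second one gives `uᵀ P_{t-1}⁻¹ u ≤ V_{t-1}`.
For the bound, `P_t ≼ β I` implies `β⁻¹ I ≼ P_t⁻¹` (conjugate by `P_t^{-1/2}`), so
`‖θ̃_t‖² ≤ β V_t ≤ β V_0`.
-/

open Matrix

namespace Matrix

section CommRing

variable {m n α : Type*} [Fintype m] [Fintype n] [CommRing α]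

lemma dotProduct_mulVec_eq_transpose_mulVec_dotProduct (A : Matrix m n α) (x : m → α)
    (y : n → α) : x ⬝ᵥ (A *ᵥ y) = (Aᵀ *ᵥ x) ⬝ᵥ y := by
  rw [dotProduct_mulVec, mulVec_transpose]

lemma IsSymm.dotProduct_mulVec_comm {A : Matrix n n α} (hA : A.IsSymm) (x y : n → α) :
    x ⬝ᵥ (A *ᵥ y) = y ⬝ᵥ (A *ᵥ x) := by
  rw [dotProduct_mulVec_eq_transpose_mulVec_dotProduct, hA.eq, dotProduct_comm]

lemma dotProduct_transpose_mul_mul_mulVec (A : Matrix m n α) (B : Matrix m m α) (x : n → α) :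
    x ⬝ᵥ ((Aᵀ * B * A) *ᵥ x) = (A *ᵥ x) ⬝ᵥ (B *ᵥ (A *ᵥ x)) := by
  rw [← mulVec_mulVec, ← mulVec_mulVec, dotProduct_mulVec_eq_transpose_mulVec_dotProduct,
    transpose_transpose]

variable [DecidableEq m] [DecidableEq n]
variable {R : Matrix m m α} {L : Matrix m n α} {P P' : Matrix n n α}

lemma inv_mul_mul_mul_inv_eq_sub_inv (hR : IsUnit R) (hP : IsUnit P) (hP' : IsUnit P')
    (hPinv : P'⁻¹ = P⁻¹ + Lᵀ * R⁻¹ * L) :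
    R⁻¹ * L * P' * Lᵀ * R⁻¹ = R⁻¹ - (L * P * Lᵀ + R)⁻¹ := by
  have hP'inv : IsUnit (P⁻¹ + Lᵀ * R⁻¹ * L) := hPinv ▸ isUnit_nonsing_inv_iff.mpr hP'
  rw [add_comm, add_mul_mul_inv_eq_sub R L P Lᵀ hR hP hP'inv, ← hPinv,
    nonsing_inv_nonsing_inv _ ((isUnit_iff_isUnit_det P').mp hP'), sub_sub_cancel]

lemma dotProduct_inv_mulVec_sub_gain_mulVec (hR : IsUnit R) (hRs : R.IsSymm) (hP : IsUnit P)
    (hP' : IsUnit P') (hP's : P'.IsSymm) (hPinv : P'⁻¹ = P⁻¹ + Lᵀ * R⁻¹ * L)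
    (u : n → α) (e : m → α) :
    (u - (P' * Lᵀ * R⁻¹) *ᵥ e) ⬝ᵥ (P'⁻¹ *ᵥ (u - (P' * Lᵀ * R⁻¹) *ᵥ e)) =
      u ⬝ᵥ (P⁻¹ *ᵥ u) + (L *ᵥ u - e) ⬝ᵥ (R⁻¹ *ᵥ (L *ᵥ u - e)) -
        e ⬝ᵥ ((L * P * Lᵀ + R)⁻¹ *ᵥ e) := by
  obtain ⟨w, hw⟩ : ∃ w, w = (Lᵀ * R⁻¹) *ᵥ e := ⟨_, rfl⟩
  have hgain : (P' * Lᵀ * R⁻¹) *ᵥ e = P' *ᵥ w := by rw [hw, mulVec_mulVec, Matrix.mul_assoc]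
  have hP'P'inv : P' * P'⁻¹ = 1 := mul_nonsing_inv _ ((isUnit_iff_isUnit_det P').mp hP')
  have hfilter : P'⁻¹ *ᵥ (P' *ᵥ w) = w := by
    rw [mulVec_mulVec, nonsing_inv_mul _ ((isUnit_iff_isUnit_det P').mp hP'), one_mulVec]
  have hRinv : R⁻¹.IsSymm := hRs.inv
  have hprior : u ⬝ᵥ (P'⁻¹ *ᵥ u) = u ⬝ᵥ (P⁻¹ *ᵥ u) + (L *ᵥ u) ⬝ᵥ (R⁻¹ *ᵥ (L *ᵥ u)) := by
    rw [hPinv, add_mulVec, dotProduct_add, dotProduct_transpose_mul_mul_mulVec]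
  have hcross : u ⬝ᵥ w = (L *ᵥ u) ⬝ᵥ (R⁻¹ *ᵥ e) := by
    rw [hw, ← mulVec_mulVec, dotProduct_mulVec_eq_transpose_mulVec_dotProduct, transpose_transpose]
  have hcross' : (P' *ᵥ w) ⬝ᵥ (P'⁻¹ *ᵥ u) = u ⬝ᵥ w := by
    rw [dotProduct_comm, hP's.dotProduct_mulVec_comm, mulVec_mulVec, hP'P'inv, one_mulVec,
      dotProduct_comm]
  have hgainquad : (P' *ᵥ w) ⬝ᵥ w = e ⬝ᵥ (R⁻¹ *ᵥ e) - e ⬝ᵥ ((L * P * Lᵀ + R)⁻¹ *ᵥ e) := by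
    have hT : (Lᵀ * R⁻¹)ᵀ = R⁻¹ * L := by rw [transpose_mul, transpose_transpose, hRinv.eq]
    rw [dotProduct_comm, hw, ← dotProduct_transpose_mul_mul_mulVec, hT, ← Matrix.mul_assoc,
      inv_mul_mul_mul_inv_eq_sub_inv hR hP hP' hPinv, sub_mulVec, dotProduct_sub]
  have hinnov : (L *ᵥ u - e) ⬝ᵥ (R⁻¹ *ᵥ (L *ᵥ u - e)) = (L *ᵥ u) ⬝ᵥ (R⁻¹ *ᵥ (L *ᵥ u)) -
      2 * (L *ᵥ u) ⬝ᵥ (R⁻¹ *ᵥ e) + e ⬝ᵥ (R⁻¹ *ᵥ e) := by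
    rw [mulVec_sub, dotProduct_sub, sub_dotProduct, sub_dotProduct,
      hRinv.dotProduct_mulVec_comm e]
    ring
  rw [hgain, mulVec_sub, hfilter, sub_dotProduct, dotProduct_sub,
    dotProduct_sub, hprior, hcross', hgainquad, hinnov, hcross]
  ring

end CommRing

variable {m n : Type*} [Fintype m] [Fintype n]

lemma PosSemidef.dotProduct_mulVec_le {A B : Matrix n n ℝ} (h : (A - B).PosSemidef)
    (x : n → ℝ) : x ⬝ᵥ (B *ᵥ x) ≤ x ⬝ᵥ (A *ᵥ x) := by
  have hx : 0 ≤ x ⬝ᵥ ((A - B) *ᵥ x) := by simpa using h.dotProduct_mulVec_nonneg x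
  rw [sub_mulVec, dotProduct_sub] at hx
  linarith

variable [DecidableEq n]

lemma PosDef.smul_inv_sub_one_posSemidef {P : Matrix n n ℝ} (hP : P.PosDef) {β : ℝ}
    (hβ : (β • 1 - P).PosSemidef) : (β • P⁻¹ - 1).PosSemidef := by
  open scoped MatrixOrder in
  set Q := CFC.sqrt P⁻¹
  have hQQ : Q * Q = P⁻¹ := CFC.sqrt_mul_sqrt_self _ hP.inv.posSemidef.nonneg
  have hQ : Qᴴ = Q := (CFC.sqrt_nonneg P⁻¹).posSemidef.isHermitian
  have hQdet : IsUnit Q.det :=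
    (isUnit_iff_isUnit_det Q).mp (isUnit_of_mul_isUnit_left (hQQ ▸ hP.inv.isUnit))
  have hQPQ : Q * P * Q = 1 := by
    rw [← nonsing_inv_nonsing_inv P hP.det_pos.ne'.isUnit, ← hQQ, mul_inv_rev, Matrix.mul_assoc,
      Matrix.mul_assoc, nonsing_inv_mul _ hQdet, Matrix.mul_one, mul_nonsing_inv _ hQdet]
  have hconj := hβ.conjTranspose_mul_mul_same Q
  rwa [hQ, Matrix.mul_sub, Matrix.sub_mul, hQPQ, Matrix.mul_smul, Matrix.mul_one,
    Matrix.smul_mul, hQQ] at hconj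

lemma PosDef.dotProduct_self_le_mul_dotProduct_inv_mulVec {P : Matrix n n ℝ} (hP : P.PosDef)
    {β : ℝ} (hβ : (β • 1 - P).PosSemidef) (x : n → ℝ) : x ⬝ᵥ x ≤ β * (x ⬝ᵥ (P⁻¹ *ᵥ x)) := by
  simpa [smul_mulVec, dotProduct_smul] using
    (hP.smul_inv_sub_one_posSemidef hβ).dotProduct_mulVec_le x

variable [DecidableEq m]

lemma lyapunov_step_le {R F : Matrix m m ℝ} {L : Matrix m n ℝ} {G P P' : Matrix n n ℝ}
    (hR : R.PosDef) (hF : F.IsSymm) (hP : P.PosDef) (hP' : P'.PosDef)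
    (hPinv : P'⁻¹ = P⁻¹ + Lᵀ * R⁻¹ * L) (θ : n → ℝ) (e : m → ℝ)
    (hFe : F *ᵥ e = L *ᵥ (G *ᵥ θ))
    (hF_le : ((L * P * Lᵀ + R)⁻¹ - (F - 1) * R⁻¹ * (F - 1)).PosSemidef)
    (hG_le : (P⁻¹ - Gᵀ * P⁻¹ * G).PosSemidef) :
    (G *ᵥ θ - (P' * Lᵀ * R⁻¹) *ᵥ e) ⬝ᵥ (P'⁻¹ *ᵥ (G *ᵥ θ - (P' * Lᵀ * R⁻¹) *ᵥ e)) ≤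
      θ ⬝ᵥ (P⁻¹ *ᵥ θ) := by
  rw [dotProduct_inv_mulVec_sub_gain_mulVec hR.isUnit (isHermitian_iff_isSymm.mp hR.isHermitian)
    hP.isUnit hP'.isUnit (isHermitian_iff_isSymm.mp hP'.isHermitian) hPinv, ← hFe]
  have hinnov : (F *ᵥ e - e) ⬝ᵥ (R⁻¹ *ᵥ (F *ᵥ e - e)) = e ⬝ᵥ (((F - 1) * R⁻¹ * (F - 1)) *ᵥ e) := by
    have hF1 : (F - 1) * R⁻¹ * (F - 1) = (F - 1)ᵀ * R⁻¹ * (F - 1) := by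
      rw [transpose_sub, hF.eq, transpose_one]
    rw [hF1, dotProduct_transpose_mul_mul_mulVec, sub_mulVec, one_mulVec]
  have hpred := hG_le.dotProduct_mulVec_le θ
  rw [dotProduct_transpose_mul_mul_mulVec] at hpred
  linarith [hF_le.dotProduct_mulVec_le e]

end Matrix

theorem ekf_lyapunov_sequence_nonincreasing_general
    (p r : ℕ)
    (R : ℕ → Matrix (Fin r) (Fin r) ℝ) (L : ℕ → Matrix (Fin r) (Fin p) ℝ)
    (F : ℕ → Matrix (Fin r) (Fin r) ℝ) (G : ℕ → Matrix (Fin p) (Fin p) ℝ)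
    (hRpos : ∀ t : ℕ, (R (t + 1)).PosDef)
    (hFsymm : ∀ t : ℕ, (F (t + 1)).IsSymm)
    (P : ℕ → Matrix (Fin p) (Fin p) ℝ)
    (hPpos : ∀ t : ℕ, (P t).PosDef)
    (hPinv : ∀ t : ℕ,
      (P (t + 1))⁻¹ = (P t)⁻¹ + (L (t + 1))ᵀ * (R (t + 1))⁻¹ * L (t + 1))
    (θ : ℕ → Fin p → ℝ) (e : ℕ → Fin r → ℝ)
    (hθ : ∀ t : ℕ,
      θ (t + 1) = G (t + 1) *ᵥ θ t - (P (t + 1) * (L (t + 1))ᵀ * (R (t + 1))⁻¹) *ᵥ e (t + 1))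
    (hFe : ∀ t : ℕ, F (t + 1) *ᵥ e (t + 1) = L (t + 1) *ᵥ (G (t + 1) *ᵥ θ t))
    (hLoew1 : ∀ t : ℕ,
      ((L (t + 1) * P t * (L (t + 1))ᵀ + R (t + 1))⁻¹ -
        (F (t + 1) - 1) * (R (t + 1))⁻¹ * (F (t + 1) - 1)).PosSemidef)
    (hLoew2 : ∀ t : ℕ, ((P t)⁻¹ - (G (t + 1))ᵀ * (P t)⁻¹ * G (t + 1)).PosSemidef) :
    (Antitone fun t : ℕ => θ t ⬝ᵥ ((P t)⁻¹ *ᵥ θ t)) ∧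
      ∀ β : ℝ, 0 < β → (∀ t : ℕ, (β • (1 : Matrix (Fin p) (Fin p) ℝ) - P t).PosSemidef) →
        ∀ t : ℕ, θ t ⬝ᵥ θ t ≤ β * (θ 0 ⬝ᵥ ((P 0)⁻¹ *ᵥ θ 0)) := by
  have hV : Antitone fun t : ℕ => θ t ⬝ᵥ ((P t)⁻¹ *ᵥ θ t) := by
    refine antitone_nat_of_succ_le fun t => ?_
    rw [hθ t]
    exact lyapunov_step_le (hRpos t) (hFsymm t) (hPpos t) (hPpos (t + 1)) (hPinv t) (θ t)
      (e (t + 1)) (hFe t) (hLoew1 t) (hLoew2 t)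
  refine ⟨hV, fun β hβ hPβ t => ?_⟩
  calc θ t ⬝ᵥ θ t ≤ β * (θ t ⬝ᵥ ((P t)⁻¹ *ᵥ θ t)) :=
        (hPpos t).dotProduct_self_le_mul_dotProduct_inv_mulVec (hPβ t) (θ t)
    _ ≤ β * (θ 0 ⬝ᵥ ((P 0)⁻¹ *ᵥ θ 0)) := by gcongr; exact hV (Nat.zero_le t)

/-- The EKF Lyapunov sequence `V_t := θ̃_tᵀ P_t⁻¹ θ̃_t` is nonincreasing under the Loewner
conditions, and if `P_t ≼ β I` for all `t` then `‖θ̃_t‖² ≤ β V_0`.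
(Quantities at time `t ≥ 1` are indexed with argument `t+1`, `t : ℕ`.) -/
theorem ekf_lyapunov_sequence_nonincreasing
    (p r : ℕ) (hp : 0 < p) (hr : 0 < r)
    (R : ℕ → Matrix (Fin r) (Fin r) ℝ) (L : ℕ → Matrix (Fin r) (Fin p) ℝ)
    (F : ℕ → Matrix (Fin r) (Fin r) ℝ) (G : ℕ → Matrix (Fin p) (Fin p) ℝ)
    (hRpos : ∀ t : ℕ, (R (t + 1)).PosDef)
    (hRsymm : ∀ t : ℕ, (R (t + 1)).IsSymm)
    (hFsymm : ∀ t : ℕ, (F (t + 1)).IsSymm)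
    (P : ℕ → Matrix (Fin p) (Fin p) ℝ)
    (hP0 : (P 0).PosDef)
    (hPrec : ∀ t : ℕ,
      P (t + 1) =
        (1 - (P t * (L (t + 1))ᵀ * (L (t + 1) * P t * (L (t + 1))ᵀ + R (t + 1))⁻¹) * L (t + 1)) *
          P t)
    (hPpos : ∀ t : ℕ, (P t).PosDef)
    (hPinv : ∀ t : ℕ,
      (P (t + 1))⁻¹ = (P t)⁻¹ + (L (t + 1))ᵀ * (R (t + 1))⁻¹ * L (t + 1))
    (θ : ℕ → Fin p → ℝ) (e : ℕ → Fin r → ℝ)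
    (hθ : ∀ t : ℕ,
      θ (t + 1) = G (t + 1) *ᵥ θ t - (P (t + 1) * (L (t + 1))ᵀ * (R (t + 1))⁻¹) *ᵥ e (t + 1))
    (hFe : ∀ t : ℕ, F (t + 1) *ᵥ e (t + 1) = L (t + 1) *ᵥ (G (t + 1) *ᵥ θ t))
    (hLoew1 : ∀ t : ℕ,
      ((L (t + 1) * P t * (L (t + 1))ᵀ + R (t + 1))⁻¹ -
        (F (t + 1) - 1) * (R (t + 1))⁻¹ * (F (t + 1) - 1)).PosSemidef)
    (hLoew2 : ∀ t : ℕ, ((P t)⁻¹ - (G (t + 1))ᵀ * (P t)⁻¹ * G (t + 1)).PosSemidef) :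
    (Antitone fun t : ℕ => θ t ⬝ᵥ ((P t)⁻¹ *ᵥ θ t)) ∧
      ∀ β : ℝ, 0 < β → (∀ t : ℕ, (β • (1 : Matrix (Fin p) (Fin p) ℝ) - P t).PosSemidef) →
        ∀ t : ℕ, θ t ⬝ᵥ θ t ≤ β * (θ 0 ⬝ᵥ ((P 0)⁻¹ *ᵥ θ 0)) :=
  ekf_lyapunov_sequence_nonincreasing_general p r R L F G hRpos hFsymm P hPpos hPinv θ e hθ hFe
    hLoew1 hLoew2
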